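/- Let Ω1 = {X ∈ R^{n1×n2} : every column of X has at most s1 nonzero entries}, Ω2 = {X ∈ R^{n1×n2} : X has at most s2 nonzero columns}, and Ω12 = Ω1 ∩ Ω2. Let Y ∈ R^{n1×n2}, let X1 be a best Frobenius-norm approximation of Y in Ω1 (obtained by setting to zero all but the s1 largest-magnitude entries in each column of Y), and let X2 be a best Frobenius-norm approximation of X1 in Ω2 (obtained by setting to zero all but the s2 columns of X1 with largest ℓ2 norm). Then X2 is a best Frobenius-norm approximation of Y in Ω12, i.e., ‖X2 − Y‖_F ≤ ‖Z − Y‖_F for every Z ∈ Ω12. -/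

import Mathlib

open Matrix

/-- The Frobenius norm of a real matrix. -/
noncomputable def frobNorm {n1 n2 : ℕ} (M : Matrix (Fin n1) (Fin n2) ℝ) : ℝ :=
  Real.sqrt (∑ i, ∑ j, (M i j) ^ 2)

/-- The set of matrices each of whose columns has at most `s1` nonzero entries. -/
def colSparse (n1 n2 s1 : ℕ) : Set (Matrix (Fin n1) (Fin n2) ℝ) :=
  {X | ∀ k : Fin n2, {i : Fin n1 | X i k ≠ 0}.ncard ≤ s1}

/-- The set of matrices with at most `s2` nonzero columns. -/
def fewCols (n1 n2 s2 : ℕ) : Set (Matrix (Fin n1) (Fin n2) ℝ) :=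
  {X | {k : Fin n2 | ∃ i : Fin n1, X i k ≠ 0}.ncard ≤ s2}

/-!
Both projections act by masking: `X1` agrees with `Y` on its support, and every column of `X2` is
either zero or the corresponding column of `X1`. Hence for any `M` supported in the support of
`X1`, the errors `X1 - Y` and `M - X1` have disjoint supports, and Pythagoras gives
`‖M - Y‖² = ‖X1 - Y‖² + ‖M - X1‖²`. Given a competitor `Z ∈ Ω12`, restrict `X1` to the nonzero
columns of `Z`: the result `W` lies in `Ω2`, and `‖W - Y‖ ≤ ‖Z - Y‖` column by column, because each
column of `X1` is a best `s1`-sparse approximation of the corresponding column of `Y`. Finally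
`‖X2 - X1‖ ≤ ‖W - X1‖` becomes `‖X2 - Y‖ ≤ ‖W - Y‖` by Pythagoras.
-/

variable {n1 n2 : ℕ}

def IsBestApprox (S : Set (Matrix (Fin n1) (Fin n2) ℝ)) (Y X : Matrix (Fin n1) (Fin n2) ℝ) :
    Prop :=
  X ∈ S ∧ ∀ Z ∈ S, frobNorm (X - Y) ≤ frobNorm (Z - Y)

lemma frobNorm_nonneg (M : Matrix (Fin n1) (Fin n2) ℝ) : 0 ≤ frobNorm M :=
  Real.sqrt_nonneg _

lemma frobNorm_sq (M : Matrix (Fin n1) (Fin n2) ℝ) : frobNorm M ^ 2 = ∑ i, ∑ j, M i j ^ 2 :=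
  Real.sq_sqrt (by positivity)

lemma frobNorm_le_frobNorm_iff {A B : Matrix (Fin n1) (Fin n2) ℝ} :
    frobNorm A ≤ frobNorm B ↔ ∑ j, ∑ i, A i j ^ 2 ≤ ∑ j, ∑ i, B i j ^ 2 := by
  rw [Finset.sum_comm, Finset.sum_comm (f := fun j i => B i j ^ 2)]
  exact Real.sqrt_le_sqrt_iff (by positivity)

lemma frobNorm_sub_sq_eq_add {X Y M : Matrix (Fin n1) (Fin n2) ℝ}
    (h : ∀ i j, (X i j - Y i j) * (M i j - X i j) = 0) :
    frobNorm (M - Y) ^ 2 = frobNorm (M - X) ^ 2 + frobNorm (X - Y) ^ 2 := by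
  simp only [frobNorm_sq, Matrix.sub_apply, ← Finset.sum_add_distrib]
  exact Finset.sum_congr rfl fun i _ => Finset.sum_congr rfl fun j _ => by
    linear_combination 2 * h i j

lemma frobNorm_sub_le_of_support_subset {X Y M M' : Matrix (Fin n1) (Fin n2) ℝ}
    (hX : ∀ i j, X i j ≠ 0 → X i j = Y i j) (hM : ∀ i j, M i j ≠ 0 → X i j ≠ 0)
    (hM' : ∀ i j, M' i j ≠ 0 → X i j ≠ 0) (h : frobNorm (M - X) ≤ frobNorm (M' - X)) :
    frobNorm (M - Y) ≤ frobNorm (M' - Y) := by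
  have orth : ∀ N : Matrix (Fin n1) (Fin n2) ℝ, (∀ i j, N i j ≠ 0 → X i j ≠ 0) →
      ∀ i j, (X i j - Y i j) * (N i j - X i j) = 0 := by
    intro N hN i j
    by_cases hXij : X i j = 0
    · rw [hXij, not_imp_not.mp (hN i j) hXij]; ring
    · rw [hX i j hXij, sub_self, zero_mul]
  rw [← pow_le_pow_iff_left₀ (frobNorm_nonneg _) (frobNorm_nonneg _) two_ne_zero,
    frobNorm_sub_sq_eq_add (orth M hM), frobNorm_sub_sq_eq_add (orth M' hM')]
  gcongr
  exact frobNorm_nonneg _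

lemma updateCol_mem_colSparse {s : ℕ} {X : Matrix (Fin n1) (Fin n2) ℝ}
    (hX : X ∈ colSparse n1 n2 s) (k : Fin n2) {v : Fin n1 → ℝ} (hv : {i | v i ≠ 0}.ncard ≤ s) :
    X.updateCol k v ∈ colSparse n1 n2 s := by
  intro j
  rcases eq_or_ne j k with rfl | hjk
  · simpa only [updateCol_self] using hv
  · simpa only [updateCol_ne hjk] using hX j

lemma updateCol_mem_fewCols {s : ℕ} {X : Matrix (Fin n1) (Fin n2) ℝ} (hX : X ∈ fewCols n1 n2 s)
    {k : Fin n2} (hk : ∃ i, X i k ≠ 0) (v : Fin n1 → ℝ) :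
    X.updateCol k v ∈ fewCols n1 n2 s := by
  refine le_trans (Set.ncard_le_ncard ?_ (Set.toFinite _)) hX
  rintro j ⟨i, hi⟩
  rcases eq_or_ne j k with rfl | hjk
  · exact hk
  · exact ⟨i, by rwa [updateCol_ne hjk] at hi⟩

namespace IsBestApprox

variable {S : Set (Matrix (Fin n1) (Fin n2) ℝ)} {Y X : Matrix (Fin n1) (Fin n2) ℝ}

lemma sum_sq_col_le (h : IsBestApprox S Y X) {k : Fin n2} {v : Fin n1 → ℝ}
    (hv : X.updateCol k v ∈ S) : ∑ i, (X i k - Y i k) ^ 2 ≤ ∑ i, (v i - Y i k) ^ 2 := by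
  have split (M : Matrix (Fin n1) (Fin n2) ℝ) : ∑ j, ∑ i, (M - Y) i j ^ 2 =
      ∑ i, (M i k - Y i k) ^ 2 + ∑ j ∈ {k}ᶜ, ∑ i, (M i j - Y i j) ^ 2 :=
    Fintype.sum_eq_add_sum_compl k _
  have hle := frobNorm_le_frobNorm_iff.mp (h.2 _ hv)
  have off_k : ∑ j ∈ {k}ᶜ, ∑ i, (X.updateCol k v i j - Y i j) ^ 2 =
      ∑ j ∈ {k}ᶜ, ∑ i, (X i j - Y i j) ^ 2 :=
    Finset.sum_congr rfl fun j hj => by simp only [updateCol_ne (by simpa using hj)]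
  rw [split, split, off_k] at hle
  simpa only [updateCol_self, add_le_add_iff_right] using hle

lemma colSparse_eq_of_ne_zero {s : ℕ} (h : IsBestApprox (colSparse n1 n2 s) Y X) {i₀ : Fin n1}
    {k : Fin n2} (hX : X i₀ k ≠ 0) : X i₀ k = Y i₀ k := by
  classical
  by_contra hne
  set v : Fin n1 → ℝ := fun i => if X i k = 0 then 0 else Y i k with hv
  have hv_supp : {i | v i ≠ 0}.ncard ≤ s := by
    refine le_trans (Set.ncard_le_ncard ?_ (Set.toFinite _)) (h.1 k)
    intro i hi hXi
    simp [hv, hXi] at hi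
  have hlt : ∑ i, (v i - Y i k) ^ 2 < ∑ i, (X i k - Y i k) ^ 2 := by
    refine Finset.sum_lt_sum (fun i _ => ?_) ⟨i₀, Finset.mem_univ _, ?_⟩
    · by_cases hXi : X i k = 0 <;> simp [hv, hXi, sq_nonneg]
    · simpa [hv, hX] using sq_pos_of_ne_zero (sub_ne_zero.mpr hne)
  exact hlt.not_ge (h.sum_sq_col_le (updateCol_mem_colSparse h.1 k hv_supp))

lemma fewCols_eq_of_ne_zero {s : ℕ} (h : IsBestApprox (fewCols n1 n2 s) Y X) {i₀ : Fin n1}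
    {k : Fin n2} (hX : X i₀ k ≠ 0) : X i₀ k = Y i₀ k := by
  have hle : ∑ i, (X i k - Y i k) ^ 2 ≤ 0 := by
    simpa using h.sum_sq_col_le (updateCol_mem_fewCols h.1 ⟨i₀, hX⟩ fun i => Y i k)
  have hzero := (Finset.sum_eq_zero_iff_of_nonneg fun i _ => sq_nonneg (X i k - Y i k)).mp
    (le_antisymm hle (by positivity)) i₀ (Finset.mem_univ _)
  exact sub_eq_zero.mp (pow_eq_zero_iff two_ne_zero |>.mp hzero)

lemma exists_mem_fewCols_frobNorm_sub_le {s1 s2 : ℕ} (h : IsBestApprox (colSparse n1 n2 s1) Y X)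
    {Z : Matrix (Fin n1) (Fin n2) ℝ} (hZ1 : Z ∈ colSparse n1 n2 s1) (hZ2 : Z ∈ fewCols n1 n2 s2) :
    ∃ W ∈ fewCols n1 n2 s2,
      (∀ i j, W i j ≠ 0 → X i j ≠ 0) ∧ frobNorm (W - Y) ≤ frobNorm (Z - Y) := by
  classical
  let W : Matrix (Fin n1) (Fin n2) ℝ := of fun i j => if ∃ i', Z i' j ≠ 0 then X i j else 0
  refine ⟨W, ?_, fun i j hW => ?_, frobNorm_le_frobNorm_iff.mpr (Finset.sum_le_sum fun j _ => ?_)⟩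
  · refine le_trans (Set.ncard_le_ncard ?_ (Set.toFinite _)) hZ2
    rintro j ⟨i, hi⟩
    exact (ite_ne_right_iff.mp hi).1
  · exact (ite_ne_right_iff.mp hW).2
  · by_cases hj : ∃ i', Z i' j ≠ 0
    · simpa [W, hj] using
        h.sum_sq_col_le (v := fun i => Z i j) (updateCol_mem_colSparse h.1 j (hZ1 j))
    · push Not at hj
      simp [W, hj]

end IsBestApprox

/-- Lemma 7 of the paper: if `X1` is a best Frobenius-norm approximation of `Y` among matrices
with `s1`-sparse columns, and `X2` is a best Frobenius-norm approximation of `X1` among matrices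
with at most `s2` nonzero columns, then `X2` is a best Frobenius-norm approximation of `Y` in the
intersection `Ω12` of the two sets. -/
theorem stmt9 {n1 n2 : ℕ} (s1 s2 : ℕ) (Y X1 X2 : Matrix (Fin n1) (Fin n2) ℝ)
    (hX1 : X1 ∈ colSparse n1 n2 s1)
    (hX1min : ∀ Z ∈ colSparse n1 n2 s1, frobNorm (X1 - Y) ≤ frobNorm (Z - Y))
    (hX2 : X2 ∈ fewCols n1 n2 s2)
    (hX2min : ∀ Z ∈ fewCols n1 n2 s2, frobNorm (X2 - X1) ≤ frobNorm (Z - X1)) :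
    X2 ∈ colSparse n1 n2 s1 ∩ fewCols n1 n2 s2 ∧
    ∀ Z ∈ colSparse n1 n2 s1 ∩ fewCols n1 n2 s2, frobNorm (X2 - Y) ≤ frobNorm (Z - Y) := by
  have h1 : IsBestApprox (colSparse n1 n2 s1) Y X1 := ⟨hX1, hX1min⟩
  have h2 : IsBestApprox (fewCols n1 n2 s2) X1 X2 := ⟨hX2, hX2min⟩
  have hX2_supp : ∀ i j, X2 i j ≠ 0 → X1 i j ≠ 0 := fun i j hij =>
    h2.fewCols_eq_of_ne_zero hij ▸ hij
  refine ⟨⟨fun k => le_trans (Set.ncard_le_ncard (fun i => hX2_supp i k)) (hX1 k), hX2⟩, ?_⟩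
  intro Z hZ
  obtain ⟨W, hW, hW_supp, hWZ⟩ := h1.exists_mem_fewCols_frobNorm_sub_le hZ.1 hZ.2
  calc frobNorm (X2 - Y)
      ≤ frobNorm (W - Y) := frobNorm_sub_le_of_support_subset
        (fun _ _ => h1.colSparse_eq_of_ne_zero) hX2_supp hW_supp (hX2min W hW)
    _ ≤ frobNorm (Z - Y) := hWZ
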